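/- arXiv:1503.07502 — 2 statements merged into one kernel-verified Lean document; each statement's English description precedes it below -/
import Mathlib

section
/- Let f = g_Q ∗ 1 be a sieve function of range Q ≪ N with Eratosthenes transform g supported in [1,Q]. Then for all positive integers a and q, ∑_{n∼N, n≡a (mod q)} f(n) = (N/q) ∑_{d ≤ Q, (d,q)|a} (g(d)/d)·(d,q) + O_ε(Q^{1+ε}), where (d,q) denotes gcd(d,q). -/
/-! Exchanging the sums, the band sum is `∑_{d ≤ Q} g(d) · #{n ∼ N : d ∣ n, n ≡ a (q)}`. By the
Chinese remainder theorem the two congruences are compatible exactly when `(d,q) ∣ a`, and then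
they cut out a single residue class modulo `[d,q] = dq/(d,q)`, which meets `(N, 2N]` in
`N (d,q)/(dq) + O(1)` points. The total error is therefore at most `∑_{d ≤ Q} |g(d)| ≪_ε Q^{1+ε}`.
-/

open Finset
open scoped Classical

noncomputable section

/-- `e(α) = e^{2πiα}`. -/
def expi (α : ℝ) : ℂ := Complex.exp (2 * Real.pi * Complex.I * α)

/-- The sieve function of range `Q` attached to the Eratosthenes transform `g`:
`f(n) = ∑_{d ∣ n, d ≤ Q} g(d)`. -/
def sieveFn (g : ℕ → ℝ) (Q : ℕ) (n : ℕ) : ℝ :=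
  ∑ d ∈ n.divisors.filter (fun d => d ≤ Q), g d

/-- The sieve function evaluated at integer arguments (used for shifted arguments
`f(n-a)`, divisibility being understood in `ℤ`). -/
def sieveZ (g : ℕ → ℝ) (Q : ℕ) (m : ℤ) : ℝ :=
  ∑ d ∈ Finset.Icc 1 Q, if (d : ℤ) ∣ m then g d else 0

/-- `g` is essentially bounded, with constant `Cg ε` for the exponent `ε`:
`g(d) ≪_ε d^ε` for every `ε > 0`. -/
def EssBddWith (Cg : ℝ → ℝ) (g : ℕ → ℝ) : Prop :=
  ∀ ε : ℝ, 0 < ε → ∀ d : ℕ, 1 ≤ d → |g d| ≤ Cg ε * (d : ℝ) ^ ε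

/-- `g` is supported in `[1,Q]`. -/
def SuppIn (g : ℕ → ℝ) (Q : ℕ) : Prop := ∀ d : ℕ, g d ≠ 0 → 1 ≤ d ∧ d ≤ Q

/-- The restricted weight `w_H`. -/
def wH (w : ℝ → ℝ) (H : ℕ) (h : ℤ) : ℝ := if |h| ≤ (H : ℤ) then w h else 0

/-- `ŵ_H(β) = ∑_{0 ≤ |h| ≤ H} w(h) e(hβ)`. -/
def wHat (w : ℝ → ℝ) (H : ℕ) (β : ℝ) : ℂ :=
  ∑ h ∈ Finset.Icc (-(H : ℤ)) (H : ℤ), (w h : ℂ) * expi (h * β)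

/-- `ŵ_H(0)`, as a real number. -/
def wHat0 (w : ℝ → ℝ) (H : ℕ) : ℝ := ∑ h ∈ Finset.Icc (-(H : ℤ)) (H : ℤ), w h

/-- The correlation `W_H(a) = ∑_h w_H(h) w_H(h-a)` of `w_H`. -/
def WHcorr (w : ℝ → ℝ) (H : ℕ) (a : ℤ) : ℝ :=
  ∑ h ∈ Finset.Icc (-(H : ℤ)) (H : ℤ), wH w H h * wH w H (h - a)

/-- `Ŵ_H(β) = ∑_{0 ≤ |h| ≤ 2H} W_H(h) e(hβ)`. -/
def WHat (w : ℝ → ℝ) (H : ℕ) (β : ℝ) : ℂ :=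
  ∑ h ∈ Finset.Icc (-(2 * H : ℤ)) (2 * H : ℤ), (WHcorr w H h : ℂ) * expi (h * β)

/-- `Ŵ_H(0)`, as a real number. -/
def WHat0 (w : ℝ → ℝ) (H : ℕ) : ℝ :=
  ∑ h ∈ Finset.Icc (-(2 * H : ℤ)) (2 * H : ℤ), WHcorr w H h

/-- `L¹_ℓ(F) = (1/ℓ) ∑_{j<ℓ, (j,ℓ)=1} |F(j/ℓ)|` (the sum being over `j ≥ 1`). -/
def Lone (F : ℝ → ℂ) (ℓ : ℕ) : ℝ :=
  (ℓ : ℝ)⁻¹ * ∑ j ∈ (Finset.Ico 1 ℓ).filter (fun j => Nat.Coprime j ℓ), ‖F (j / ℓ)‖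

/-- `L²_ℓ(F) = (1/ℓ²) ∑_{j<ℓ} |F(j/ℓ)|²` (the sum being over `j ≥ 1`). -/
def Ltwo (F : ℝ → ℂ) (ℓ : ℕ) : ℝ :=
  ((ℓ : ℝ) ^ 2)⁻¹ * ∑ j ∈ Finset.Ico 1 ℓ, ‖F (j / ℓ)‖ ^ 2

/-- A good weight: `w_H` is uniformly bounded as `H → ∞` and
`L²_ℓ(ŵ_H) ≪ H/ℓ` for all `ℓ ≥ 1`. -/
def GoodWeight (w : ℝ → ℝ) : Prop :=
  (∃ B : ℝ, ∀ (H : ℕ) (h : ℤ), |wH w H h| ≤ B) ∧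
    ∃ C : ℝ, ∀ H ℓ : ℕ, 1 ≤ H → 1 ≤ ℓ → Ltwo (wHat w H) ℓ ≤ C * H / ℓ

/-- `∑_{n ∼ N, n ≡ a (mod q)} f(n)`. -/
def bandSum (f : ℕ → ℝ) (N q : ℕ) (a : ℤ) : ℝ :=
  ∑ n ∈ (Finset.Ioc N (2 * N)).filter (fun (n : ℕ) => (n : ℤ) % q = a % q), f n

/-- `T_{w,f}(q,N,H) = ∑_{0≤|a|≤H} w(a) ∑_{n∼N, n≡a (q)} f(n) − (ŵ_H(0)/q) ∑_{n∼N} f(n)`. -/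
def Twf (w : ℝ → ℝ) (f : ℕ → ℝ) (q N H : ℕ) : ℝ :=
  (∑ a ∈ Finset.Icc (-(H : ℤ)) (H : ℤ), w a * bandSum f N q a) -
    wHat0 w H * (∑ n ∈ Finset.Ioc N (2 * N), f n) / q

/-- `T_{W,f}(q,N,H) = ∑_a W_H(a) ∑_{n∼N, n≡a (q)} f(n) − (Ŵ_H(0)/q) ∑_{n∼N} f(n)`. -/
def TWf (w : ℝ → ℝ) (f : ℕ → ℝ) (q N H : ℕ) : ℝ :=
  (∑ a ∈ Finset.Icc (-(2 * H : ℤ)) (2 * H : ℤ), WHcorr w H a * bandSum f N q a) -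
    WHat0 w H * (∑ n ∈ Finset.Ioc N (2 * N), f n) / q

/-- `T_f(q,N,H) = ∑_{1≤a≤H} ∑_{n∼N, n≡a (q)} f(n) − (H/q) ∑_{n∼N} f(n)`. -/
def Tf (f : ℕ → ℝ) (q N H : ℕ) : ℝ :=
  (∑ a ∈ Finset.Icc 1 H, bandSum f N q (a : ℤ)) -
    (H : ℝ) * (∑ n ∈ Finset.Ioc N (2 * N), f n) / q

/-- The first Ramanujan coefficient `R_1(f) = ∑_{d ≤ Q} g(d)/d`. -/
def Rcoef1 (g : ℕ → ℝ) (Q : ℕ) : ℝ := ∑ d ∈ Finset.Icc 1 Q, g d / d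

/-- The `ℓ`-th Ramanujan coefficient `R_ℓ(f) = ∑_{d ≤ Q, ℓ ∣ d} g(d)/d`. -/
def Rcoef (g : ℕ → ℝ) (Q ℓ : ℕ) : ℝ :=
  ∑ d ∈ (Finset.Icc 1 Q).filter (fun d => ℓ ∣ d), g d / d

/-- The short weighted sum `∑_n w_H(n−x) f(n)`. -/
def shortSum (w : ℝ → ℝ) (H : ℕ) (f : ℕ → ℝ) (x : ℕ) : ℝ :=
  ∑ n ∈ Finset.Icc 1 (x + H), wH w H ((n : ℤ) - (x : ℤ)) * f n

/-- The mixed weighted Selberg integral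
`J_{w,(f₁,f₂)}(N,H) = ∑_{x∼N} ∏_j (∑_n w_H(n−x) f_j(n) − ŵ_H(0) R_1(f_j))`,
where `r_j = R_1(f_j)`. -/
def Jmix (w : ℝ → ℝ) (f₁ f₂ : ℕ → ℝ) (r₁ r₂ : ℝ) (N H : ℕ) : ℝ :=
  ∑ x ∈ Finset.Ioc N (2 * N),
    (shortSum w H f₁ x - wHat0 w H * r₁) * (shortSum w H f₂ x - wHat0 w H * r₂)

/-- The Selberg integral `J_f(N,H) = ∑_{x∼N} |∑_{x<n≤x+H} f(n) − R_1(f) H|²`,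
where `r = R_1(f)`. -/
def Jf (f : ℕ → ℝ) (r : ℝ) (N H : ℕ) : ℝ :=
  ∑ x ∈ Finset.Ioc N (2 * N), ((∑ n ∈ Finset.Ioc x (x + H), f n) - r * H) ^ 2

/-- The correlation `C_{f₁,f₂}(a) = ∑_{n∼N} f₁(n) f₂(n−a)` of the sieve functions
attached to `g₁, g₂` of ranges `Q₁, Q₂`. -/
def corrFn (g₁ g₂ : ℕ → ℝ) (Q₁ Q₂ N : ℕ) (a : ℤ) : ℝ :=
  ∑ n ∈ Finset.Ioc N (2 * N), sieveFn g₁ Q₁ n * sieveZ g₂ Q₂ ((n : ℤ) - a)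

/-- The unit step weight `u`. -/
def ustep : ℝ → ℝ := fun x => if 0 < x then 1 else 0

/-- The Cesàro weight `C_H`. -/
def cesaro (H : ℕ) : ℝ → ℝ := fun x => if |x| ≤ (H : ℝ) then 1 - |x| / H else 0

/-- Goldston's truncated divisor sum `Λ_R(n) = ∑_{d∣n, d≤R} μ(d) log(R/d)`. -/
def LambdaR (R : ℕ) (n : ℕ) : ℝ :=
  ∑ d ∈ n.divisors.filter (fun d => d ≤ R),
    ((ArithmeticFunction.moebius d : ℤ) : ℝ) * Real.log ((R : ℝ) / d)

/-- Goldston's truncated divisor sum at integer arguments. -/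
def LambdaRZ (R : ℕ) (m : ℤ) : ℝ :=
  ∑ d ∈ Finset.Icc 1 R,
    if (d : ℤ) ∣ m then ((ArithmeticFunction.moebius d : ℤ) : ℝ) * Real.log ((R : ℝ) / d) else 0

theorem Nat.abs_card_filter_Ioc_modEq_sub_le {r : ℕ} (hr : 0 < r) {a b : ℕ} (hab : a ≤ b)
    (v : ℕ) : |(#{x ∈ Ioc a b | x ≡ v [MOD r]} : ℝ) - ((b : ℝ) - a) / r| ≤ 1 := by
  set u : ℚ := ((a : ℚ) - v) / r
  have hu : ((b : ℚ) - v) / r = u + ((b : ℚ) - a) / r := by simp only [u]; ring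
  have ht : 0 ≤ ((b : ℚ) - a) / r :=
    div_nonneg (sub_nonneg.mpr (by exact_mod_cast hab)) r.cast_nonneg
  have hcard := Nat.Ioc_filter_modEq_card a b hr v
  rw [hu, max_eq_left (sub_nonneg.mpr (Int.floor_mono (le_add_of_nonneg_right ht)))] at hcard
  have hbound : |(#{x ∈ Ioc a b | x ≡ v [MOD r]} : ℚ) - ((b : ℚ) - a) / r| ≤ 1 := by
    rw [show (#{x ∈ Ioc a b | x ≡ v [MOD r]} : ℚ) = _ from congrArg (Int.cast (R := ℚ)) hcard,
      abs_le]
    push_cast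
    constructor <;> linarith [Int.floor_le u, Int.lt_floor_add_one u,
      Int.floor_le (u + ((b : ℚ) - a) / r), Int.lt_floor_add_one (u + ((b : ℚ) - a) / r)]
  have hboundℝ := (Rat.cast_le (K := ℝ)).mpr hbound
  push_cast at hboundℝ
  exact hboundℝ

theorem Nat.exists_modEq_lcm_iff_dvd_and_modEq {d q a : ℕ} (h : Nat.gcd d q ∣ a) :
    ∃ x, ∀ n, d ∣ n ∧ n ≡ a [MOD q] ↔ n ≡ x [MOD Nat.lcm d q] := by
  obtain ⟨x, hxd, hxq⟩ := Nat.chineseRemainder' ((Nat.modEq_zero_iff_dvd.mpr h).symm)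
  refine ⟨x, fun n => ⟨fun ⟨hdn, hnq⟩ => ?_, fun hn => ⟨?_, ?_⟩⟩⟩
  · exact Nat.mod_lcm ((Nat.modEq_zero_iff_dvd.mpr hdn).trans hxd.symm) (hnq.trans hxq.symm)
  · exact Nat.modEq_zero_iff_dvd.mp ((hn.of_dvd (Nat.dvd_lcm_left d q)).trans hxd)
  · exact (hn.of_dvd (Nat.dvd_lcm_right d q)).trans hxq

theorem abs_card_filter_dvd_modEq_sub_le (N : ℕ) {d q : ℕ} (hd : 0 < d) (hq : 0 < q) (a : ℕ) :
    |(#{n ∈ Ioc N (2 * N) | d ∣ n ∧ n ≡ a [MOD q]} : ℝ) -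
      if Nat.gcd d q ∣ a then (N : ℝ) * Nat.gcd d q / (d * q) else 0| ≤ 1 := by
  split_ifs with h
  · obtain ⟨x, hx⟩ := Nat.exists_modEq_lcm_iff_dvd_and_modEq h
    have hlcm : (N : ℝ) * Nat.gcd d q / (d * q) = (((2 * N : ℕ) : ℝ) - N) / Nat.lcm d q := by
      have hgl : (Nat.gcd d q : ℝ) * Nat.lcm d q = d * q := by exact_mod_cast Nat.gcd_mul_lcm d q
      have hgcd : (Nat.gcd d q : ℝ) ≠ 0 := by exact_mod_cast (Nat.gcd_pos_of_pos_left q hd).ne'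
      rw [← hgl]
      push_cast
      field_simp
      ring
    rw [hlcm]
    simp only [hx]
    exact Nat.abs_card_filter_Ioc_modEq_sub_le (Nat.lcm_pos hd hq) (by omega) x
  · have hempty : #{n ∈ Ioc N (2 * N) | d ∣ n ∧ n ≡ a [MOD q]} = 0 := by
      refine card_eq_zero.mpr (filter_eq_empty_iff.mpr fun n _ ⟨hdn, hn⟩ => h ?_)
      exact ((hn.of_dvd (Nat.gcd_dvd_right d q)).dvd_iff dvd_rfl).mp
        ((Nat.gcd_dvd_left d q).trans hdn)
    simp [hempty]

theorem sieveFn_eq_sum_Icc (g : ℕ → ℝ) (Q : ℕ) {n : ℕ} (hn : 0 < n) :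
    sieveFn g Q n = ∑ d ∈ Icc 1 Q, if d ∣ n then g d else 0 := by
  rw [sieveFn, ← sum_filter]
  congr 1
  ext d
  simp only [mem_filter, Nat.mem_divisors, mem_Icc]
  exact ⟨fun ⟨⟨hdn, _⟩, hdQ⟩ => ⟨⟨Nat.pos_of_dvd_of_pos hdn hn, hdQ⟩, hdn⟩,
    fun ⟨⟨_, hdQ⟩, hdn⟩ => ⟨⟨hdn, hn.ne'⟩, hdQ⟩⟩

theorem bandSum_sieveFn (g : ℕ → ℝ) (Q N q a : ℕ) :
    bandSum (sieveFn g Q) N q a =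
      ∑ d ∈ Icc 1 Q, g d * #{n ∈ Ioc N (2 * N) | d ∣ n ∧ n ≡ a [MOD q]} := by
  have hband : {n ∈ Ioc N (2 * N) | (fun n : ℕ => (n : ℤ) % q = (a : ℤ) % q) n} =
      {n ∈ Ioc N (2 * N) | n ≡ a [MOD q]} :=
    filter_congr fun n _ => Int.natCast_modEq_iff
  rw [bandSum, hband, sum_congr rfl fun n hn => sieveFn_eq_sum_Icc g Q
    (Nat.zero_lt_of_lt (mem_Ioc.mp (mem_filter.mp hn).1).1), sum_comm]
  refine sum_congr rfl fun d _ => ?_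
  rw [← sum_filter, sum_const, nsmul_eq_mul, mul_comm, filter_filter]
  simp only [and_comm]

theorem sum_abs_le_of_essBddWith {Cg : ℝ → ℝ} {g : ℕ → ℝ} (hg : EssBddWith Cg g) {ε : ℝ}
    (hε : 0 < ε) (Q : ℕ) : ∑ d ∈ Icc 1 Q, |g d| ≤ |Cg ε| * (Q : ℝ) ^ (1 + ε) := by
  calc ∑ d ∈ Icc 1 Q, |g d| ≤ ∑ _d ∈ Icc 1 Q, |Cg ε| * (Q : ℝ) ^ ε := by
        refine sum_le_sum fun d hd => ?_
        obtain ⟨hd1, hdQ⟩ := mem_Icc.mp hd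
        calc |g d| ≤ Cg ε * (d : ℝ) ^ ε := hg ε hε d hd1
          _ ≤ |Cg ε| * (Q : ℝ) ^ ε := by
            gcongr
            exact le_abs_self _
    _ = |Cg ε| * (Q : ℝ) ^ (1 + ε) := by
      rw [sum_const, Nat.card_Icc, Nat.add_sub_cancel, nsmul_eq_mul,
        Real.rpow_one_add' Q.cast_nonneg (by positivity)]
      ring

theorem statement6_general (A : ℝ) (Cg : ℝ → ℝ) (ε : ℝ) (hε : 0 < ε) :
    ∃ C : ℝ, 0 < C ∧ ∀ (N Q a q : ℕ) (g : ℕ → ℝ),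
      0 < N → 0 < Q → 0 < a → 0 < q →
      (Q : ℝ) ≤ A * N →
      EssBddWith Cg g → SuppIn g Q →
      |bandSum (sieveFn g Q) N q (a : ℤ) -
          (N : ℝ) / q * ∑ d ∈ (Finset.Icc 1 Q).filter (fun d => Nat.gcd d q ∣ a),
            g d / d * Nat.gcd d q| ≤ C * (Q : ℝ) ^ (1 + ε) := by
  refine ⟨|Cg ε| + 1, by positivity, fun N Q a q g _ _ _ hq _ hg _ => ?_⟩
  have hmain : (N : ℝ) / q * ∑ d ∈ (Icc 1 Q).filter (fun d => Nat.gcd d q ∣ a),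
        g d / d * Nat.gcd d q =
      ∑ d ∈ Icc 1 Q, g d * if Nat.gcd d q ∣ a then (N : ℝ) * Nat.gcd d q / (d * q) else 0 := by
    rw [mul_sum, sum_filter]
    refine sum_congr rfl fun d _ => ?_
    split_ifs <;> ring
  rw [bandSum_sieveFn, hmain, ← sum_sub_distrib]
  calc _ ≤ ∑ d ∈ Icc 1 Q, |g d| := by
        refine (abs_sum_le_sum_abs _ _).trans (sum_le_sum fun d hd => ?_)
        rw [← mul_sub, abs_mul]
        exact mul_le_of_le_one_right (abs_nonneg _)
          (abs_card_filter_dvd_modEq_sub_le N (mem_Icc.mp hd).1 hq a)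
    _ ≤ |Cg ε| * (Q : ℝ) ^ (1 + ε) := sum_abs_le_of_essBddWith hg hε Q
    _ ≤ (|Cg ε| + 1) * (Q : ℝ) ^ (1 + ε) := by gcongr; linarith

/-- for `f = g_Q ∗ 1` of range `Q ≪ N` and all positive integers `a, q`,
`∑_{n∼N, n≡a (q)} f(n) = (N/q) ∑_{d≤Q, (d,q)∣a} (g(d)/d)·(d,q) + O_ε(Q^{1+ε})`. -/
theorem statement6 (A : ℝ) (hA : 0 < A) (Cg : ℝ → ℝ) (ε : ℝ) (hε : 0 < ε) :
    ∃ C : ℝ, 0 < C ∧ ∀ (N Q a q : ℕ) (g : ℕ → ℝ),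
      0 < N → 0 < Q → 0 < a → 0 < q →
      (Q : ℝ) ≤ A * N →
      EssBddWith Cg g → SuppIn g Q →
      |bandSum (sieveFn g Q) N q (a : ℤ) -
          (N : ℝ) / q * ∑ d ∈ (Finset.Icc 1 Q).filter (fun d => Nat.gcd d q ∣ a),
            g d / d * Nat.gcd d q| ≤ C * (Q : ℝ) ^ (1 + ε) :=
  statement6_general A Cg ε hε

end
end

section
/- Let f be a sieve function of range Q ≪ N, with Q, N positive integers. Then for every integer ℓ > 1 and every j with 1 ≤ j ≤ ℓ and (j,ℓ) = 1, the exponential sum f̂(j/ℓ) := ∑_{n∼N} f(n) e(nj/ℓ) satisfies f̂(j/ℓ) = R_ℓ(f)·N + O_ε((ℓQ)^ε (Q + ℓ)), uniformly in j ∈ ℤ_ℓ^*. -/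
open Finset
open scoped Classical

noncomputable section

/-!
Opening `f` and swapping the sums, `f̂(j/ℓ) = ∑_{d ≤ Q} g(d) ∑_{N/d < m ≤ 2N/d} e(dmj/ℓ)`.
When `ℓ ∣ d` the inner sum counts the multiples of `d` in `(N, 2N]`, that is `N/d + O(1)`, and these
terms give `R_ℓ(f) N + O(Q max |g|)`. Otherwise it is a geometric sum of ratio `e(x)`,
`x = {dj/ℓ} ≠ 0`, hence bounded by `1 / (2x(1-x))`, because `|e(x) - 1| = 2 sin πx ≥ 4x(1-x)`.
Since `j` is invertible mod `ℓ`, each residue `dj mod ℓ` occurs at most `Q/ℓ + 1` times for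
`d ≤ Q`, and `∑_{0<s<ℓ} 1 / (2(s/ℓ)(1-s/ℓ)) = ℓ ∑_{0<s<ℓ} 1/s ≤ ℓ (1 + log ℓ)`.
Finally `|g(d)| ≪_ε Q^ε` and `log ℓ ≪_ε ℓ^ε`.
-/

lemma expi_eq_exp_I_mul (θ : ℝ) :
    expi θ = Complex.exp (Complex.I * ((2 * Real.pi * θ : ℝ) : ℂ)) := by
  rw [expi]; push_cast; ring_nf

@[simp] lemma norm_expi (θ : ℝ) : ‖expi θ‖ = 1 := by
  rw [expi_eq_exp_I_mul, Complex.norm_exp_I_mul_ofReal]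

lemma expi_add (a b : ℝ) : expi (a + b) = expi a * expi b := by
  simp only [expi, ← Complex.exp_add]; push_cast; ring_nf

@[simp] lemma expi_intCast (k : ℤ) : expi k = 1 := by
  rw [expi, show 2 * Real.pi * Complex.I * ((k : ℝ) : ℂ) = k * (2 * Real.pi * Complex.I) by
    push_cast; ring]
  exact Complex.exp_int_mul_two_pi_mul_I k

@[simp] lemma expi_natCast (k : ℕ) : expi k = 1 := by
  exact_mod_cast expi_intCast k

lemma expi_natCast_mul (m : ℕ) (θ : ℝ) : expi (m * θ) = expi θ ^ m := by
  rw [expi, expi, ← Complex.exp_nat_mul]; push_cast; ring_nf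

lemma expi_fract (θ : ℝ) : expi (Int.fract θ) = expi θ := by
  conv_rhs => rw [← Int.floor_add_fract θ]
  rw [expi_add, expi_intCast, one_mul]

lemma norm_expi_sub_one (θ : ℝ) : ‖expi θ - 1‖ = 2 * |Real.sin (Real.pi * θ)| := by
  rw [expi_eq_exp_I_mul, Complex.norm_exp_I_mul_ofReal_sub_one, norm_mul, Real.norm_eq_abs,
    Real.norm_eq_abs, abs_two]
  ring_nf

lemma norm_sum_Ioc_pow_le {z : ℂ} (hz : ‖z‖ = 1) (hz1 : z ≠ 1) (a b : ℕ) :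
    ‖∑ m ∈ Ioc a b, z ^ m‖ ≤ 2 / ‖z - 1‖ := by
  rcases le_or_gt a b with hab | hba
  · rw [← Finset.Ico_add_one_add_one_eq_Ioc, geom_sum_Ico hz1 (by omega), norm_div]
    gcongr
    calc ‖z ^ (b + 1) - z ^ (a + 1)‖ ≤ ‖z ^ (b + 1)‖ + ‖z ^ (a + 1)‖ := norm_sub_le _ _
      _ = 2 := by rw [norm_pow, norm_pow, hz, one_pow]; norm_num
  · rw [Ioc_eq_empty (by omega), sum_empty, norm_zero]
    positivity

lemma two_mul_mul_one_sub_le_sin_pi_mul {x : ℝ} (h0 : 0 ≤ x) (h1 : x ≤ 1) :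
    2 * x * (1 - x) ≤ Real.sin (Real.pi * x) := by
  have jordan : ∀ y : ℝ, 0 ≤ y → y ≤ 1 / 2 → 2 * y ≤ Real.sin (Real.pi * y) := fun y hy0 hy1 => by
    have := Real.mul_le_sin (by positivity : 0 ≤ Real.pi * y) (by nlinarith [Real.pi_pos])
    rwa [← mul_assoc, div_mul_cancel₀ _ Real.pi_ne_zero] at this
  rcases le_total x (1 / 2) with hx | hx
  · nlinarith [jordan x h0 hx]
  · have := jordan (1 - x) (by linarith) (by linarith)
    rw [mul_one_sub Real.pi, Real.sin_pi_sub] at this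
    nlinarith

lemma norm_sum_Ioc_expi_mul_le {θ : ℝ} (hθ : Int.fract θ ≠ 0) (a b : ℕ) :
    ‖∑ m ∈ Ioc a b, expi (m * θ)‖ ≤ (2 * Int.fract θ * (1 - Int.fract θ))⁻¹ := by
  set x := Int.fract θ
  have hx0 : 0 < x := (Int.fract_nonneg θ).lt_of_ne' hθ
  have hx1 : x < 1 := Int.fract_lt_one θ
  have hpos : 0 < 4 * x * (1 - x) := by have := sub_pos.2 hx1; positivity
  have hlow : 4 * x * (1 - x) ≤ ‖expi θ - 1‖ := by
    rw [← expi_fract, norm_expi_sub_one]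
    linarith [two_mul_mul_one_sub_le_sin_pi_mul hx0.le hx1.le, le_abs_self (Real.sin (Real.pi * x))]
  have hne : expi θ ≠ 1 := fun h => by rw [h, sub_self, norm_zero] at hlow; linarith
  simp_rw [expi_natCast_mul]
  calc _ ≤ 2 / ‖expi θ - 1‖ := norm_sum_Ioc_pow_le (norm_expi θ) hne a b
    _ ≤ 2 / (4 * x * (1 - x)) := by gcongr
    _ = _ := by field_simp; ring

lemma norm_sum_Ioc_expi_mul_div_le {k ℓ : ℕ} (hℓ : 0 < ℓ) (hk : ¬ ℓ ∣ k) (a b : ℕ) :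
    ‖∑ m ∈ Ioc a b, expi (m * ((k : ℝ) / ℓ))‖ ≤
      (2 * (((k % ℓ : ℕ) : ℝ) / ℓ) * (1 - ((k % ℓ : ℕ) : ℝ) / ℓ))⁻¹ := by
  have hfract := Int.fract_div_natCast_eq_div_natCast_mod (k := ℝ) (m := k) (n := ℓ)
  rw [← hfract]
  refine norm_sum_Ioc_expi_mul_le ?_ a b
  rw [hfract]
  have : k % ℓ ≠ 0 := mt Nat.dvd_of_mod_eq_zero hk
  positivity

lemma sum_Ioo_reflect {M : Type*} [AddCommMonoid M] (f : ℕ → M) (ℓ : ℕ) :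
    ∑ s ∈ Ioo 0 ℓ, f (ℓ - s) = ∑ s ∈ Ioo 0 ℓ, f s :=
  sum_nbij' (ℓ - ·) (ℓ - ·) (fun s hs => by rw [mem_Ioo] at hs ⊢; omega)
    (fun s hs => by rw [mem_Ioo] at hs ⊢; omega) (fun s hs => by rw [mem_Ioo] at hs; omega)
    (fun s hs => by rw [mem_Ioo] at hs; omega) (fun _ _ => rfl)

lemma sum_Ioo_inv_two_mul_div_mul_one_sub_div_le (ℓ : ℕ) :
    ∑ s ∈ Ioo 0 ℓ, (2 * ((s : ℝ) / ℓ) * (1 - (s : ℝ) / ℓ))⁻¹ ≤ ℓ * (1 + Real.log ℓ) := by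
  have partial_fractions : ∀ s ∈ Ioo 0 ℓ, (2 * ((s : ℝ) / ℓ) * (1 - (s : ℝ) / ℓ))⁻¹ =
      ℓ / 2 * ((s : ℝ)⁻¹ + ((ℓ - s : ℕ) : ℝ)⁻¹) := by
    intro s hs
    rw [mem_Ioo] at hs
    have hs' : (0 : ℝ) < ((ℓ - s : ℕ) : ℝ) := by exact_mod_cast Nat.sub_pos_of_lt hs.2
    have hℓ : (0 : ℝ) < ℓ := by exact_mod_cast hs.1.trans hs.2
    rw [Nat.cast_sub hs.2.le] at hs' ⊢
    have : (0 : ℝ) < s := by exact_mod_cast hs.1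
    field_simp
    ring
  have harmonic_bound : ∑ s ∈ Ioo 0 ℓ, (s : ℝ)⁻¹ ≤ 1 + Real.log ℓ :=
    calc ∑ s ∈ Ioo 0 ℓ, (s : ℝ)⁻¹ ≤ ∑ s ∈ Icc 1 ℓ, (s : ℝ)⁻¹ :=
          sum_le_sum_of_subset_of_nonneg (fun s hs => by rw [mem_Ioo] at hs; rw [mem_Icc]; omega)
            (fun _ _ _ => by positivity)
      _ = harmonic ℓ := by simp [harmonic_eq_sum_Icc]
      _ ≤ 1 + Real.log ℓ := harmonic_le_one_add_log ℓ
  rw [sum_congr rfl partial_fractions, ← mul_sum, sum_add_distrib,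
    sum_Ioo_reflect (fun s => ((s : ℕ) : ℝ)⁻¹)]
  nlinarith [Nat.cast_nonneg (α := ℝ) ℓ]

lemma sum_filter_not_dvd_mod_le {ℓ j : ℕ} (hℓ : 0 < ℓ) (hj : j.Coprime ℓ) (Q : ℕ) {B : ℕ → ℝ}
    (hB : ∀ s ∈ Ioo 0 ℓ, 0 ≤ B s) :
    ∑ d ∈ Icc 1 Q with ¬ ℓ ∣ d, B (d * j % ℓ) ≤ ((Q / ℓ + 1 : ℕ) : ℝ) * ∑ s ∈ Ioo 0 ℓ, B s := by
  set D := {d ∈ Icc 1 Q | ¬ ℓ ∣ d}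
  let φ : ℕ → ℕ × ℕ := fun d => (d / ℓ, d * j % ℓ)
  have hinj : Set.InjOn φ D := by
    intro d₁ _ d₂ _ h
    simp only [φ, Prod.mk.injEq] at h
    have hmod : d₁ % ℓ = d₂ % ℓ := Nat.ModEq.cancel_right_of_coprime hj.symm h.2
    rw [← Nat.div_add_mod d₁ ℓ, ← Nat.div_add_mod d₂ ℓ, h.1, hmod]
  have hmaps : D.image φ ⊆ range (Q / ℓ + 1) ×ˢ Ioo 0 ℓ := by
    intro p hp
    obtain ⟨d, hd, rfl⟩ := mem_image.1 hp
    simp only [D, mem_filter, mem_Icc] at hd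
    have : ¬ ℓ ∣ d * j := fun h => hd.2 (hj.symm.dvd_of_dvd_mul_right h)
    simp only [φ, mem_product, mem_range, mem_Ioo, Nat.lt_succ_iff]
    exact ⟨Nat.div_le_div_right hd.1.2, Nat.pos_of_ne_zero (mt Nat.dvd_of_mod_eq_zero this),
      Nat.mod_lt _ hℓ⟩
  calc ∑ d ∈ D, B (d * j % ℓ) = ∑ p ∈ D.image φ, B p.2 :=
        (sum_image (f := fun p => B p.2) hinj).symm
    _ ≤ ∑ p ∈ range (Q / ℓ + 1) ×ˢ Ioo 0 ℓ, B p.2 :=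
      sum_le_sum_of_subset_of_nonneg hmaps fun p hp _ => hB p.2 (mem_product.1 hp).2
    _ = _ := by simp only [sum_product, sum_const, card_range, nsmul_eq_mul]

lemma sieveFn_eq_sum_filter_dvd (g : ℕ → ℝ) (Q : ℕ) {n : ℕ} (hn : n ≠ 0) :
    sieveFn g Q n = ∑ d ∈ Icc 1 Q with d ∣ n, g d := by
  rw [sieveFn]
  congr 1
  ext d
  simp only [mem_filter, Nat.mem_divisors, mem_Icc]
  constructor
  · rintro ⟨⟨hdn, -⟩, hdQ⟩
    exact ⟨⟨Nat.pos_of_dvd_of_pos hdn (Nat.pos_of_ne_zero hn), hdQ⟩, hdn⟩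
  · rintro ⟨⟨-, hdQ⟩, hdn⟩
    exact ⟨⟨hdn, hn⟩, hdQ⟩

lemma sum_Ioc_filter_dvd {M : Type*} [AddCommMonoid M] (F : ℕ → M) (a b : ℕ) {d : ℕ}
    (hd : 0 < d) : ∑ n ∈ Ioc a b with d ∣ n, F n = ∑ m ∈ Ioc (a / d) (b / d), F (d * m) := by
  refine sum_nbij' (· / d) (d * ·) ?_ ?_ ?_ ?_ ?_
  · intro n hn
    simp only [mem_filter, mem_Ioc] at hn ⊢
    exact ⟨Nat.div_lt_div_of_lt_of_dvd hn.2 hn.1.1, Nat.div_le_div_right hn.1.2⟩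
  · intro m hm
    simp only [mem_filter, mem_Ioc] at hm ⊢
    refine ⟨⟨?_, ?_⟩, dvd_mul_right d m⟩
    · rw [Nat.div_lt_iff_lt_mul hd] at hm; linarith [hm.1]
    · rw [Nat.le_div_iff_mul_le hd] at hm; linarith [hm.2]
  · intro n hn
    exact Nat.mul_div_cancel' (mem_filter.1 hn).2
  · intro m _
    exact Nat.mul_div_cancel_left m hd
  · intro n hn
    rw [Nat.mul_div_cancel' (mem_filter.1 hn).2]

lemma sum_sieveFn_mul (g : ℕ → ℝ) (Q a b : ℕ) (F : ℕ → ℂ) :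
    ∑ n ∈ Ioc a b, (sieveFn g Q n : ℂ) * F n =
      ∑ d ∈ Icc 1 Q, (g d : ℂ) * ∑ m ∈ Ioc (a / d) (b / d), F (d * m) := by
  calc ∑ n ∈ Ioc a b, (sieveFn g Q n : ℂ) * F n
      = ∑ n ∈ Ioc a b, ∑ d ∈ Icc 1 Q, if d ∣ n then (g d : ℂ) * F n else 0 := by
        refine sum_congr rfl fun n hn => ?_
        rw [sieveFn_eq_sum_filter_dvd g Q (by rw [mem_Ioc] at hn; omega), ← sum_filter,
          Complex.ofReal_sum, sum_mul]
    _ = ∑ d ∈ Icc 1 Q, (g d : ℂ) * ∑ m ∈ Ioc (a / d) (b / d), F (d * m) := by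
        rw [sum_comm]
        refine sum_congr rfl fun d hd => ?_
        rw [← sum_filter, ← sum_Ioc_filter_dvd _ a b (mem_Icc.1 hd).1, mul_sum]

lemma abs_natCast_sub_div_sub_div_le (a b d : ℕ) (hab : a ≤ b) :
    |((b / d - a / d : ℕ) : ℝ) - ((b : ℝ) - a) / d| ≤ 1 := by
  have floor_bounds : ∀ x : ℕ, (x : ℝ) / d - 1 < ((x / d : ℕ) : ℝ) ∧ ((x / d : ℕ) : ℝ) ≤ x / d :=
    fun x => ⟨by simpa only [Nat.floor_div_eq_div] using Nat.sub_one_lt_floor ((x : ℝ) / d),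
      Nat.cast_div_le⟩
  obtain ⟨ha₁, ha₂⟩ := floor_bounds a
  obtain ⟨hb₁, hb₂⟩ := floor_bounds b
  rw [Nat.cast_sub (Nat.div_le_div_right hab), sub_div, abs_le]
  constructor <;> linarith

lemma norm_sum_filter_dvd_sub_Rcoef_le {g : ℕ → ℝ} {M : ℝ} {Q : ℕ}
    (hg : ∀ d ∈ Icc 1 Q, |g d| ≤ M) (ℓ j : ℕ) {a b : ℕ} (hab : a ≤ b) :
    ‖∑ d ∈ Icc 1 Q with ℓ ∣ d, (g d : ℂ) * ∑ m ∈ Ioc (a / d) (b / d), expi ((d * m : ℕ) * j / ℓ)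
      - ((Rcoef g Q ℓ * ((b : ℝ) - a) : ℝ) : ℂ)‖ ≤ M * Q := by
  have hterm : ∀ d ∈ {d ∈ Icc 1 Q | ℓ ∣ d},
      (g d : ℂ) * ∑ m ∈ Ioc (a / d) (b / d), expi ((d * m : ℕ) * j / ℓ) =
        ((g d * (b / d - a / d : ℕ) : ℝ) : ℂ) := by
    intro d hd
    obtain ⟨hd, k, rfl⟩ := mem_filter.1 hd
    have hℓ : ℓ ≠ 0 := by rintro rfl; simp at hd
    have hone : ∀ m, expi (((ℓ * k * m : ℕ) : ℝ) * j / ℓ) = 1 := fun m => by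
      rw [show ((ℓ * k * m : ℕ) : ℝ) * j / ℓ = ((k * m * j : ℕ) : ℝ) by push_cast; field_simp,
        expi_natCast]
    simp only [hone, sum_const, Nat.card_Ioc, nsmul_eq_mul, mul_one]
    push_cast
    ring
  have hmain : ((Rcoef g Q ℓ * ((b : ℝ) - a) : ℝ) : ℂ) =
      ∑ d ∈ Icc 1 Q with ℓ ∣ d, ((g d * (((b : ℝ) - a) / d) : ℝ) : ℂ) := by
    rw [Rcoef, sum_mul, Complex.ofReal_sum]
    exact sum_congr rfl fun d _ => by congr 1; ring
  rw [sum_congr rfl hterm, hmain, ← sum_sub_distrib]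
  calc _ ≤ ∑ d ∈ Icc 1 Q with ℓ ∣ d, |g d| := by
        refine (norm_sum_le _ _).trans (sum_le_sum fun d _ => ?_)
        rw [← Complex.ofReal_sub, Complex.norm_real, Real.norm_eq_abs, ← mul_sub, abs_mul]
        exact mul_le_of_le_one_right (abs_nonneg _) (abs_natCast_sub_div_sub_div_le a b d hab)
    _ ≤ ∑ d ∈ Icc 1 Q, |g d| :=
        sum_le_sum_of_subset_of_nonneg (filter_subset _ _) fun _ _ _ => abs_nonneg _
    _ ≤ M * Q := by
        simpa [mul_comm] using sum_le_sum hg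

lemma norm_sum_filter_not_dvd_le {g : ℕ → ℝ} {M : ℝ} {Q : ℕ} (hM : 0 ≤ M)
    (hg : ∀ d ∈ Icc 1 Q, |g d| ≤ M) {ℓ j : ℕ} (hℓ : 0 < ℓ) (hj : j.Coprime ℓ) (a b : ℕ) :
    ‖∑ d ∈ Icc 1 Q with ¬ ℓ ∣ d,
        (g d : ℂ) * ∑ m ∈ Ioc (a / d) (b / d), expi ((d * m : ℕ) * j / ℓ)‖ ≤
      M * ((Q / ℓ + 1 : ℕ) * (ℓ * (1 + Real.log ℓ))) := by
  set B : ℕ → ℝ := fun s => (2 * ((s : ℝ) / ℓ) * (1 - (s : ℝ) / ℓ))⁻¹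
  have hB : ∀ s ∈ Ioo 0 ℓ, 0 ≤ B s := by
    intro s hs
    have : (s : ℝ) / ℓ ≤ 1 :=
      div_le_one_of_le₀ (by exact_mod_cast (mem_Ioo.1 hs).2.le) (by positivity)
    have : 0 ≤ 1 - (s : ℝ) / ℓ := by linarith
    positivity
  have hterm : ∀ d ∈ {d ∈ Icc 1 Q | ¬ ℓ ∣ d},
      ‖(g d : ℂ) * ∑ m ∈ Ioc (a / d) (b / d), expi ((d * m : ℕ) * j / ℓ)‖ ≤ M * B (d * j % ℓ) := by
    intro d hd
    obtain ⟨hdQ, hℓd⟩ := mem_filter.1 hd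
    have hℓdj : ¬ ℓ ∣ d * j := fun h => hℓd (hj.symm.dvd_of_dvd_mul_right h)
    have harg : ∀ m : ℕ, ((d * m : ℕ) : ℝ) * j / ℓ = m * (((d * j : ℕ) : ℝ) / ℓ) := fun m => by
      push_cast; ring
    rw [norm_mul, Complex.norm_real, Real.norm_eq_abs]
    simp only [harg]
    exact mul_le_mul (hg d hdQ) (norm_sum_Ioc_expi_mul_div_le hℓ hℓdj _ _) (norm_nonneg _) hM
  calc _ ≤ ∑ d ∈ Icc 1 Q with ¬ ℓ ∣ d, M * B (d * j % ℓ) :=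
        (norm_sum_le _ _).trans (sum_le_sum hterm)
    _ ≤ M * ((Q / ℓ + 1 : ℕ) * ∑ s ∈ Ioo 0 ℓ, B s) := by
        rw [← mul_sum]
        exact mul_le_mul_of_nonneg_left (sum_filter_not_dvd_mod_le hℓ hj Q hB) hM
    _ ≤ M * ((Q / ℓ + 1 : ℕ) * (ℓ * (1 + Real.log ℓ))) := by
        gcongr
        exact sum_Ioo_inv_two_mul_div_mul_one_sub_div_le ℓ

lemma norm_sum_sieveFn_mul_expi_sub_le {g : ℕ → ℝ} {M : ℝ} {Q : ℕ} (hM : 0 ≤ M)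
    (hg : ∀ d ∈ Icc 1 Q, |g d| ≤ M) {ℓ j : ℕ} (hℓ : 0 < ℓ) (hj : j.Coprime ℓ) (N : ℕ) :
    ‖(∑ n ∈ Ioc N (2 * N), (sieveFn g Q n : ℂ) * expi (n * j / ℓ)) -
        ((Rcoef g Q ℓ * N : ℝ) : ℂ)‖ ≤
      M * Q + M * ((Q / ℓ + 1 : ℕ) * (ℓ * (1 + Real.log ℓ))) := by
  have hdvd := norm_sum_filter_dvd_sub_Rcoef_le hg ℓ j (by omega : N ≤ 2 * N)
  rw [show ((2 * N : ℕ) : ℝ) - N = N by push_cast; ring] at hdvd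
  rw [sum_sieveFn_mul g Q N (2 * N) (fun n => expi (n * j / ℓ)),
    ← sum_filter_add_sum_filter_not _ (ℓ ∣ ·), add_sub_right_comm]
  exact (norm_add_le _ _).trans (add_le_add hdvd (norm_sum_filter_not_dvd_le hM hg hℓ hj _ _))

lemma natCast_div_add_one_mul_le (Q ℓ : ℕ) : ((Q / ℓ + 1 : ℕ) : ℝ) * ℓ ≤ Q + ℓ := by
  have : Q / ℓ * ℓ ≤ Q := Nat.div_mul_le_self Q ℓ
  push_cast
  rw [add_mul, one_mul]
  gcongr
  exact_mod_cast this

lemma two_add_log_le_rpow {x ε : ℝ} (hx : 1 ≤ x) (hε : 0 < ε) :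
    2 + Real.log x ≤ (2 + 1 / ε) * x ^ ε := by
  have hlog := Real.log_le_rpow_div (by linarith : 0 ≤ x) hε
  have hone : 1 ≤ x ^ ε := Real.one_le_rpow hx hε.le
  rw [add_mul, div_mul_eq_mul_div, one_mul]
  linarith

lemma EssBddWith.abs_le {Cg : ℝ → ℝ} {g : ℕ → ℝ} (h : EssBddWith Cg g) {ε : ℝ} (hε : 0 < ε)
    {Q : ℕ} : ∀ d ∈ Icc 1 Q, |g d| ≤ |Cg ε| * (Q : ℝ) ^ ε := by
  intro d hd
  obtain ⟨hd1, hdQ⟩ := mem_Icc.1 hd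
  calc |g d| ≤ Cg ε * (d : ℝ) ^ ε := h ε hε d hd1
    _ ≤ |Cg ε| * (Q : ℝ) ^ ε := by
        gcongr
        exact le_abs_self _

theorem statement8_general (A : ℝ) (Cg : ℝ → ℝ) (ε : ℝ) (hε : 0 < ε) :
    ∃ C : ℝ, 0 < C ∧ ∀ (N Q ℓ j : ℕ) (g : ℕ → ℝ),
      0 < N → 0 < Q → (Q : ℝ) ≤ A * N →
      1 < ℓ → 1 ≤ j → j ≤ ℓ → Nat.Coprime j ℓ →
      EssBddWith Cg g → SuppIn g Q →
      ‖(∑ n ∈ Finset.Ioc N (2 * N), (sieveFn g Q n : ℂ) * expi (n * j / ℓ)) -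
          ((Rcoef g Q ℓ * N : ℝ) : ℂ)‖ ≤
        C * ((ℓ : ℝ) * Q) ^ ε * ((Q : ℝ) + ℓ) := by
  refine ⟨(|Cg ε| + 1) * (2 + 1 / ε), by positivity, ?_⟩
  intro N Q ℓ j g _ _ _ hℓ _ _ hj hg _
  set M := |Cg ε| * (Q : ℝ) ^ ε
  have hM : 0 ≤ M := by positivity
  have hℓ1 : (1 : ℝ) ≤ ℓ := by exact_mod_cast hℓ.le
  have hlog : 0 ≤ 1 + Real.log ℓ := by linarith [Real.log_nonneg hℓ1]
  have hQℓ := natCast_div_add_one_mul_le Q ℓ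
  calc _ ≤ M * Q + M * ((Q / ℓ + 1 : ℕ) * (ℓ * (1 + Real.log ℓ))) :=
        norm_sum_sieveFn_mul_expi_sub_le hM (hg.abs_le hε) (by omega) hj N
    _ ≤ M * Q + M * ((Q + ℓ) * (1 + Real.log ℓ)) := by
        rw [← mul_assoc (((Q / ℓ + 1 : ℕ) : ℝ))]
        gcongr
    _ ≤ M * ((Q + ℓ) * (2 + Real.log ℓ)) := by nlinarith
    _ ≤ M * ((Q + ℓ) * ((2 + 1 / ε) * (ℓ : ℝ) ^ ε)) := by
        gcongr
        exact two_add_log_le_rpow hℓ1 hε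
    _ = |Cg ε| * (2 + 1 / ε) * ((ℓ : ℝ) * Q) ^ ε * ((Q : ℝ) + ℓ) := by
        rw [Real.mul_rpow (by positivity) (by positivity)]
        ring
    _ ≤ _ := by gcongr; linarith

/-- Lemma 1: for a sieve function `f` of range `Q ≪ N`, every `ℓ > 1` and
every `j ∈ ℤ_ℓ^*`, `f̂(j/ℓ) = R_ℓ(f)·N + O_ε((ℓQ)^ε (Q + ℓ))`, uniformly in `j`. -/
theorem statement8 (A : ℝ) (hA : 0 < A) (Cg : ℝ → ℝ) (ε : ℝ) (hε : 0 < ε) :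
    ∃ C : ℝ, 0 < C ∧ ∀ (N Q ℓ j : ℕ) (g : ℕ → ℝ),
      0 < N → 0 < Q → (Q : ℝ) ≤ A * N →
      1 < ℓ → 1 ≤ j → j ≤ ℓ → Nat.Coprime j ℓ →
      EssBddWith Cg g → SuppIn g Q →
      ‖(∑ n ∈ Finset.Ioc N (2 * N), (sieveFn g Q n : ℂ) * expi (n * j / ℓ)) -
          ((Rcoef g Q ℓ * N : ℝ) : ℂ)‖ ≤
        C * ((ℓ : ℝ) * Q) ^ ε * ((Q : ℝ) + ℓ) :=
  statement8_general A Cg ε hε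

end
end
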